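/- Under the assumptions of the previous statement, if additionally F is bounded above on the convex hull C of {X₁,…,Xₙ} and inf_{z∈C} Σᵢ wᵢ g(‖z − Xᵢ‖²) = c₀ > 0, then the sequence F(z_j) converges and ‖z_{j+1} − z_j‖ → 0 as j → ∞. -/

import Mathlib

/-!
Each mean-shift step increases `F` by at least `c₀ ‖z (j+1) - z j‖²`. Indeed, the tangent line
inequality for the convex profile `k` at `‖z j - X i‖²` bounds the increment of `F` below by
`∑ i, a i (‖z j - X i‖² - ‖z (j+1) - X i‖²)` with the weights `a i = w i g (‖z j - X i‖²)`,
and since `z (j+1)` is the `a`-weighted mean of the `X i` this sum equals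
`(∑ i, a i) ‖z (j+1) - z j‖² ≥ c₀ ‖z (j+1) - z j‖²`. So `F (z j)` is nondecreasing and
bounded, hence convergent, and its increments, which dominate `c₀ ‖z (j+1) - z j‖²`, tend to `0`.
-/

open Filter Topology Finset

theorem ConvexOn.add_deriv_mul_sub_le {S : Set ℝ} {f : ℝ → ℝ} (hf : ConvexOn ℝ S f)
    {x y : ℝ} (hx : x ∈ S) (hy : y ∈ S) (hfx : DifferentiableAt ℝ f x) :
    f x + deriv f x * (y - x) ≤ f y := by
  rcases lt_trichotomy x y with hxy | rfl | hyx
  · have h := hf.deriv_le_slope hx hy hxy hfx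
    rw [slope_def_field, le_div_iff₀ (sub_pos.2 hxy)] at h
    linarith
  · simp
  · have h := hf.slope_le_deriv hy hx hyx hfx
    rw [slope_def_field, div_le_iff₀ (sub_pos.2 hyx)] at h
    linarith

section MeanShift

variable {E ι : Type*} [NormedAddCommGroup E] [InnerProductSpace ℝ E] [Fintype ι]

theorem sum_mul_norm_sub_sq_sub_norm_sub_sq {a : ι → ℝ} {X : ι → E} {y : E}
    (hy : (∑ i, a i) • y = ∑ i, a i • X i) (x : E) :
    ∑ i, a i * (‖y - X i‖ ^ 2 - ‖x - X i‖ ^ 2) = -((∑ i, a i) * ‖x - y‖ ^ 2) := by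
  have hdiff : ∀ i, ‖y - X i‖ ^ 2 - ‖x - X i‖ ^ 2 =
      -‖x - y‖ ^ 2 - 2 * inner ℝ (x - y) (y - X i) := fun i => by
    rw [← sub_add_sub_cancel x y (X i), norm_add_sq_real]
    ring
  have hcentered : ∑ i, a i • (y - X i) = 0 := by
    simp only [smul_sub, sum_sub_distrib, ← sum_smul, hy, sub_self]
  calc ∑ i, a i * (‖y - X i‖ ^ 2 - ‖x - X i‖ ^ 2)
      = -((∑ i, a i) * ‖x - y‖ ^ 2) - 2 * inner ℝ (x - y) (∑ i, a i • (y - X i)) := by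
        simp only [hdiff, inner_sum, real_inner_smul_right, sum_mul, mul_sum,
          ← sum_neg_distrib, ← sum_sub_distrib]
        exact sum_congr rfl fun i _ => by ring
    _ = -((∑ i, a i) * ‖x - y‖ ^ 2) := by simp [hcentered]

/-- The weights `w i g (‖x - X i‖²)` of the mean-shift step from `x`, where `g = -k'`. -/
noncomputable def meanShiftWeight (k : ℝ → ℝ) (w : ι → ℝ) (X : ι → E) (x : E) (i : ι) : ℝ :=
  w i * -deriv k (‖x - X i‖ ^ 2)

theorem sum_mul_comp_norm_sub_sq_add_le {k : ℝ → ℝ} (hk : ConvexOn ℝ (Set.Ici 0) k)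
    (hkd : ∀ t ∈ Set.Ici (0 : ℝ), DifferentiableAt ℝ k t) {w : ι → ℝ} (hw : ∀ i, 0 ≤ w i)
    {X : ι → E} {x y : E}
    (hy : (∑ i, meanShiftWeight k w X x i) • y = ∑ i, meanShiftWeight k w X x i • X i) :
    ∑ i, w i * k (‖x - X i‖ ^ 2) + (∑ i, meanShiftWeight k w X x i) * ‖x - y‖ ^ 2 ≤
      ∑ i, w i * k (‖y - X i‖ ^ 2) := by
  have htangent : ∀ i, w i * k (‖x - X i‖ ^ 2) -
      meanShiftWeight k w X x i * (‖y - X i‖ ^ 2 - ‖x - X i‖ ^ 2) ≤ w i * k (‖y - X i‖ ^ 2) :=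
    fun i => by
      have h := hk.add_deriv_mul_sub_le (sq_nonneg ‖x - X i‖) (sq_nonneg ‖y - X i‖)
        (hkd _ (Set.mem_Ici.2 (sq_nonneg _)))
      have := mul_le_mul_of_nonneg_left h (hw i)
      rw [meanShiftWeight]
      linarith
  have hsum := sum_le_sum fun i (_ : i ∈ univ) => htangent i
  rw [sum_sub_distrib, sum_mul_norm_sub_sq_sub_norm_sub_sq hy] at hsum
  linarith

end MeanShift

theorem tendsto_zero_of_add_mul_sq_le_succ {u v : ℕ → ℝ} {L c : ℝ}
    (hu : Tendsto u atTop (𝓝 L)) (hc : 0 < c) (hv : ∀ j, 0 ≤ v j)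
    (h : ∀ j, u j + c * v j ^ 2 ≤ u (j + 1)) : Tendsto v atTop (𝓝 0) := by
  have hincr : Tendsto (fun j => u (j + 1) - u j) atTop (𝓝 0) := by
    simpa using (hu.comp (tendsto_add_atTop_nat 1)).sub hu
  have hsq : Tendsto (fun j => v j ^ 2) atTop (𝓝 0) := by
    refine squeeze_zero (fun j => sq_nonneg _) (fun j => ?_) (by simpa using hincr.div_const c)
    rw [le_div_iff₀ hc]
    linarith [h j]
  simpa [Real.sqrt_sq (hv _)] using hsq.sqrt

theorem stmt3_general (d n : ℕ) (k : ℝ → ℝ)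
    (hconv : ConvexOn ℝ (Set.Ici (0 : ℝ)) k)
    (hdiff : ∀ x ∈ Set.Ici (0 : ℝ), DifferentiableAt ℝ k x)
    (hk' : ∀ x ∈ Set.Ici (0 : ℝ), deriv k x < 0)
    (w : Fin n → ℝ) (hw : ∀ i, 0 < w i)
    (X : Fin n → EuclideanSpace ℝ (Fin d))
    (g : ℝ → ℝ) (hg : ∀ x, g x = -(deriv k x))
    (F : EuclideanSpace ℝ (Fin d) → ℝ)
    (hF : ∀ z, F z = ∑ i, w i * k (‖z - X i‖ ^ 2))
    (z : ℕ → EuclideanSpace ℝ (Fin d))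
    (hz0 : z 0 ∈ convexHull ℝ (Set.range X))
    (hiter : ∀ j, z (j + 1) =
      (∑ i, w i * g (‖z j - X i‖ ^ 2))⁻¹ • ∑ i, (w i * g (‖z j - X i‖ ^ 2)) • X i)
    (M : ℝ) (hbdd : ∀ y ∈ convexHull ℝ (Set.range X), F y ≤ M)
    (c₀ : ℝ) (hc₀ : 0 < c₀)
    (hinf : ∀ y ∈ convexHull ℝ (Set.range X), c₀ ≤ ∑ i, w i * g (‖y - X i‖ ^ 2)) :
    (∃ L : ℝ, Filter.Tendsto (fun j => F (z j)) Filter.atTop (nhds L)) ∧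
    Filter.Tendsto (fun j => ‖z (j + 1) - z j‖) Filter.atTop (nhds 0) := by
  have hweight_eq : ∀ y i, w i * g (‖y - X i‖ ^ 2) = meanShiftWeight k w X y i := fun y i => by
    rw [hg, meanShiftWeight]
  simp only [hweight_eq] at hiter hinf
  have hweight : ∀ y i, 0 ≤ meanShiftWeight k w X y i := fun y i =>
    mul_nonneg (hw i).le (neg_nonneg.2 (hk' _ (Set.mem_Ici.2 (sq_nonneg _))).le)
  have hmem : ∀ j, z j ∈ convexHull ℝ (Set.range X) := by
    intro j
    induction j with
    | zero => exact hz0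
    | succ j ih =>
      rw [hiter j]
      exact univ.centerMass_mem_convexHull (fun i _ => hweight (z j) i)
        (hc₀.trans_le (hinf _ ih)) fun i _ => Set.mem_range_self i
  have hstep : ∀ j, (∑ i, meanShiftWeight k w X (z j) i) • z (j + 1) =
      ∑ i, meanShiftWeight k w X (z j) i • X i := fun j => by
    rw [hiter j, smul_inv_smul₀ (hc₀.trans_le (hinf _ (hmem j))).ne']
  have hascent : ∀ j, F (z j) + c₀ * ‖z (j + 1) - z j‖ ^ 2 ≤ F (z (j + 1)) := fun j => by
    have h := sum_mul_comp_norm_sub_sq_add_le hconv hdiff (fun i => (hw i).le) (hstep j)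
    rw [norm_sub_rev] at h
    rw [hF, hF]
    linarith [mul_le_mul_of_nonneg_right (hinf _ (hmem j)) (sq_nonneg ‖z (j + 1) - z j‖)]
  have hmono : Monotone fun j => F (z j) := monotone_nat_of_le_succ fun j =>
    (le_add_of_nonneg_right (by positivity)).trans (hascent j)
  have hL := tendsto_atTop_ciSup hmono ⟨M, by rintro _ ⟨j, rfl⟩; exact hbdd _ (hmem j)⟩
  exact ⟨⟨_, hL⟩, tendsto_zero_of_add_mul_sq_le_succ hL hc₀ (fun _ => norm_nonneg _) hascent⟩

/-- Under the mean-shift ascent setup, if `F` is bounded above on the convex hull `C` of the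
`X i` and `inf_{z ∈ C} ∑ i, w i * g ‖z - X i‖² = c₀ > 0`, then `F (z j)` converges and
`‖z (j+1) - z j‖ → 0`. -/
theorem stmt3 (d n : ℕ) (hn : 0 < n) (k : ℝ → ℝ)
    (hconv : ConvexOn ℝ (Set.Ici (0 : ℝ)) k)
    (hdiff : ∀ x ∈ Set.Ici (0 : ℝ), DifferentiableAt ℝ k x)
    (hk' : ∀ x ∈ Set.Ici (0 : ℝ), deriv k x < 0)
    (w : Fin n → ℝ) (hw : ∀ i, 0 < w i)
    (X : Fin n → EuclideanSpace ℝ (Fin d))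
    (g : ℝ → ℝ) (hg : ∀ x, g x = -(deriv k x))
    (F : EuclideanSpace ℝ (Fin d) → ℝ)
    (hF : ∀ z, F z = ∑ i, w i * k (‖z - X i‖ ^ 2))
    (z : ℕ → EuclideanSpace ℝ (Fin d))
    (hz0 : z 0 ∈ convexHull ℝ (Set.range X))
    (hiter : ∀ j, z (j + 1) =
      (∑ i, w i * g (‖z j - X i‖ ^ 2))⁻¹ • ∑ i, (w i * g (‖z j - X i‖ ^ 2)) • X i)
    (M : ℝ) (hbdd : ∀ y ∈ convexHull ℝ (Set.range X), F y ≤ M)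
    (c₀ : ℝ) (hc₀ : 0 < c₀)
    (hinf : ∀ y ∈ convexHull ℝ (Set.range X), c₀ ≤ ∑ i, w i * g (‖y - X i‖ ^ 2)) :
    (∃ L : ℝ, Filter.Tendsto (fun j => F (z j)) Filter.atTop (nhds L)) ∧
    Filter.Tendsto (fun j => ‖z (j + 1) - z j‖) Filter.atTop (nhds 0) :=
  stmt3_general d n k hconv hdiff hk' w hw X g hg F hF z hz0 hiter M hbdd c₀ hc₀ hinf
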